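/- arXiv:1812.07144 — 3 statements merged into one kernel-verified Lean document; each statement's English description precedes it below -/
import Mathlib

section
/- For ℙ-a.e. ω ∈ Ω^ℤ, the pushforward measures (f^n_{θ^{-n}ω})_* μ converge weakly to the sample measure μ_ω as n → ∞; that is, for every continuous φ : M → ℝ, ∫ φ d((f^n_{θ^{-n}ω})_* μ) → ∫ φ dμ_ω. Consequently μ_ω depends (ℙ-a.s.) only on the coordinates (ω_n)_{n≤0}: there is a measurable family (ν_{ω⁻})_{ω⁻ ∈ ∏_{n≤0}Ω} of Borel probability measures on M with μ_ω = ν_{(ω_n)_{n≤0}} for ℙ-a.e. ω. -/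
open MeasureTheory Filter

/-- `Q` is the i.i.d. product of `P` over the index type `ι`, characterized via
finite-dimensional cylinder sets. -/
def IsIIDProduct {Ω : Type*} [MeasurableSpace Ω] (ι : Type*) (P : Measure Ω)
    (Q : Measure (ι → Ω)) : Prop :=
  IsProbabilityMeasure Q ∧
    ∀ (s : Finset ι) (t : ι → Set Ω), (∀ i, MeasurableSet (t i)) →
      Q {x : ι → Ω | ∀ i ∈ s, x i ∈ t i} = ∏ i ∈ s, P (t i)

/-- The composition `f^n_{θ^{-n} ω} = f_{ω_0} ∘ f_{ω_{-1}} ∘ ⋯ ∘ f_{ω_{-n+1}}`. -/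
noncomputable def fwdPast {Ω M : Type*} [TopologicalSpace M] (f : Ω → Homeomorph M M)
    (ω : ℤ → Ω) : ℕ → M → M
  | 0 => id
  | n + 1 => (fwdPast f ω n) ∘ ⇑(f (ω (-(n : ℤ))))

/-!
Fix a test function `φ`. By `τ`-invariance of `μ*` and the product structure of its projection,
the numbers `∫ φ ∘ f^n_{θ^{-n}ω} dμ` are the conditional expectations of `ω ↦ ∫ φ dμ_ω` given the
coordinates `ω_k`, `k > -n`. These σ-algebras increase to the full one, so Lévy's upward theorem
gives almost sure convergence, and testing on a countable dense set of `φ` gives weak convergence.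
The limit is a measurable function of the past coordinates alone; disintegrating the joint law of
the past and of `x` under `ℙ ⊗ μ_ω` then yields a kernel `ν` with `μ_ω = ν_{ω⁻}` almost surely.
-/

open Set ProbabilityTheory Topology

section Kernels

variable {α β M : Type*} [MeasurableSpace α] [MeasurableSpace β] [MeasurableSpace M]
  {P : Measure α} {κ : Kernel α M} {π : α → β} {φ : M → ℝ} {C : ℝ}

lemma eq_map_swap_compProd [SFinite P] [IsSFiniteKernel κ] {μstar : Measure (M × α)}
    (h : ∀ A, MeasurableSet A → μstar A = ∫⁻ a, κ a {x | (x, a) ∈ A} ∂P) :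
    μstar = (P ⊗ₘ κ).map Prod.swap := by
  ext A hA
  rw [Measure.map_apply measurable_swap hA, Measure.compProd_apply (measurable_swap hA), h A hA]
  rfl

lemma norm_integral_le_of_forall_norm_le {ρ : Measure M} [IsProbabilityMeasure ρ]
    (hφC : ∀ x, ‖φ x‖ ≤ C) : ‖∫ x, φ x ∂ρ‖ ≤ C := by
  simpa using norm_integral_le_of_norm_le_const (μ := ρ) (.of_forall hφC)

lemma fst_map_compProd [SFinite P] [IsMarkovKernel κ] (hπ : Measurable π) :
    ((P ⊗ₘ κ).map fun p => (π p.1, p.2)).fst = P.map π := by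
  rw [Measure.fst_map_prodMk measurable_snd]
  conv_rhs => rw [← Measure.fst_compProd P κ, Measure.fst, Measure.map_map hπ measurable_fst]
  rfl

lemma setIntegral_preimage_integral_kernel [IsFiniteMeasure P] [IsFiniteKernel κ]
    (hπ : Measurable π) (hφ : Measurable φ) (hφC : ∀ x, ‖φ x‖ ≤ C) {B : Set β}
    (hB : MeasurableSet B) :
    ∫ a in π ⁻¹' B, ∫ x, φ x ∂κ a ∂P =
      ∫ z in B ×ˢ univ, φ z.2 ∂(P ⊗ₘ κ).map fun p => (π p.1, p.2) := by
  rw [setIntegral_map (f := fun z => φ z.2) (g := fun p : α × M => (π p.1, p.2)) (hB.prod .univ)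
      (hφ.comp measurable_snd).aestronglyMeasurable (by fun_prop),
    show (fun p : α × M => (π p.1, p.2)) ⁻¹' (B ×ˢ univ) = (π ⁻¹' B) ×ˢ univ from rfl,
    Measure.setIntegral_compProd (f := fun z => φ z.2) (hπ hB) .univ
      (Integrable.of_bound (hφ.comp measurable_snd).aestronglyMeasurable C
        (.of_forall fun z => hφC z.2)).integrableOn]
  simp

lemma condExp_integral_kernel_ae_eq [IsFiniteMeasure P] [IsMarkovKernel κ] {Q : Measure β}
    [IsFiniteMeasure Q] {μ : Measure M} [IsProbabilityMeasure μ] {F : β × M → M}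
    (hπ : Measurable π) (hF : Measurable F)
    (hlaw : (P ⊗ₘ κ).map (fun p => (π p.1, p.2)) = (Q.prod μ).map fun q => (q.1, F q))
    (hφ : Measurable φ) (hφC : ∀ x, ‖φ x‖ ≤ C) :
    P[fun a => ∫ x, φ x ∂κ a | MeasurableSpace.comap π ‹_›] =ᵐ[P]
      fun a => ∫ x, φ (F (π a, x)) ∂μ := by
  set Ψ : β → ℝ := fun y => ∫ x, φ (F (y, x)) ∂μ
  have hΨ : Measurable Ψ := (hφ.comp hF).stronglyMeasurable.integral_prod_right'.measurable
  have hPQ : P.map π = Q := by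
    rw [← fst_map_compProd (κ := κ) hπ, hlaw, Measure.fst_map_prodMk hF, ← Measure.fst, Measure.fst_prod]
  refine (ae_eq_condExp_of_forall_setIntegral_eq hπ.comap_le
    (.of_bound hφ.stronglyMeasurable.integral_kernel.aestronglyMeasurable C
      (.of_forall fun a => norm_integral_le_of_forall_norm_le hφC))
    (fun _ _ _ => (Integrable.of_bound (hΨ.comp hπ).aestronglyMeasurable C
      (.of_forall fun a => norm_integral_le_of_forall_norm_le fun x => hφC _)).integrableOn) ?_
    (hΨ.comp (comap_measurable π)).aestronglyMeasurable).symm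
  rintro _ ⟨B, hB, rfl⟩ -
  calc ∫ a in π ⁻¹' B, Ψ (π a) ∂P = ∫ y in B, Ψ y ∂Q := by
        rw [← hPQ, setIntegral_map hB hΨ.aestronglyMeasurable hπ.aemeasurable]
    _ = ∫ q in B ×ˢ univ, φ (F q) ∂(Q.prod μ) := by
        rw [setIntegral_prod (fun q => φ (F q)) (Integrable.of_bound (hφ.comp hF).aestronglyMeasurable C
          (.of_forall fun q => hφC _)).integrableOn]
        simp [Ψ]
    _ = ∫ a in π ⁻¹' B, ∫ x, φ x ∂κ a ∂P := by
        rw [setIntegral_preimage_integral_kernel hπ hφ hφC hB, hlaw,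
          setIntegral_map (f := fun z => φ z.2) (hB.prod .univ)
            (hφ.comp measurable_snd).aestronglyMeasurable (measurable_fst.prodMk hF).aemeasurable]
        rfl

lemma integral_condKernel_map_compProd_ae_eq [IsFiniteMeasure P] [IsMarkovKernel κ]
    [StandardBorelSpace M] [Nonempty M] (hπ : Measurable π) (hφ : Measurable φ)
    (hφC : ∀ x, ‖φ x‖ ≤ C) {H : β → ℝ} (hH : Measurable H)
    (hae : ∀ᵐ a ∂P, ∫ x, φ x ∂κ a = H (π a)) :
    (fun y => ∫ x, φ x ∂((P ⊗ₘ κ).map fun p => (π p.1, p.2)).condKernel y) =ᵐ[P.map π] H := by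
  set ρ := (P ⊗ₘ κ).map fun p => (π p.1, p.2)
  have hint : Integrable (fun a => ∫ x, φ x ∂κ a) P :=
    .of_bound hφ.stronglyMeasurable.integral_kernel.aestronglyMeasurable C
      (.of_forall fun a => norm_integral_le_of_forall_norm_le hφC)
  refine ae_eq_of_forall_setIntegral_eq_of_sigmaFinite
    (fun _ _ _ => (Integrable.of_bound hφ.stronglyMeasurable.integral_kernel.aestronglyMeasurable
      C (.of_forall fun y => norm_integral_le_of_forall_norm_le hφC)).integrableOn)
    (fun _ _ _ => ((integrable_map_measure hH.aestronglyMeasurable hπ.aemeasurable).2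
      (hint.congr hae)).integrableOn) fun s hs _ => ?_
  calc ∫ y in s, ∫ x, φ x ∂ρ.condKernel y ∂P.map π
      = ∫ z in s ×ˢ univ, φ z.2 ∂ρ := by
        rw [← fst_map_compProd (κ := κ) hπ,
          Measure.setIntegral_condKernel_univ_right (f := fun z => φ z.2) hs
            (Integrable.of_bound (hφ.comp measurable_snd).aestronglyMeasurable C
              (.of_forall fun z => hφC z.2)).integrableOn]
    _ = ∫ a in π ⁻¹' s, H (π a) ∂P := by
        rw [← setIntegral_preimage_integral_kernel hπ hφ hφC hs]
        exact setIntegral_congr_ae (hπ hs) (hae.mono fun a ha _ => ha)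
    _ = ∫ y in s, H y ∂P.map π := (setIntegral_map hs hH.aestronglyMeasurable hπ.aemeasurable).symm

end Kernels

section ContinuousFunctions

variable {α β M : Type*} [MeasurableSpace α] [MeasurableSpace β] [MetricSpace M] [CompactSpace M]
  [MeasurableSpace M] [BorelSpace M]

lemma lipschitzWith_integral_continuousMap (m : Measure M) [IsProbabilityMeasure m] :
    LipschitzWith 1 fun φ : C(M, ℝ) => ∫ x, φ x ∂m := by
  refine LipschitzWith.of_dist_le_mul fun φ ψ => ?_
  rw [NNReal.coe_one, one_mul, Real.dist_eq, ← Real.norm_eq_abs, ← integral_sub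
    (.of_bound φ.continuous.aestronglyMeasurable _ (.of_forall φ.norm_coe_le_norm))
    (.of_bound ψ.continuous.aestronglyMeasurable _ (.of_forall ψ.norm_coe_le_norm))]
  exact norm_integral_le_of_forall_norm_le fun x => by
    simpa only [Real.dist_eq, Real.norm_eq_abs] using ContinuousMap.dist_apply_le_dist (f := φ) x

/-- As `φ ↦ ∫ φ dm` is `1`-Lipschitz, it suffices to test on a countable dense set of `φ`. -/
lemma ae_forall_tendsto_integral {P : Measure α} {m : α → ℕ → Measure M} {m₀ : α → Measure M}
    (hm : ∀ a n, IsProbabilityMeasure (m a n)) [∀ a, IsProbabilityMeasure (m₀ a)]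
    (h : ∀ φ : C(M, ℝ), ∀ᵐ a ∂P, Tendsto (fun n => ∫ x, φ x ∂m a n) atTop (𝓝 (∫ x, φ x ∂m₀ a))) :
    ∀ᵐ a ∂P, ∀ φ : C(M, ℝ),
      Tendsto (fun n => ∫ x, φ x ∂m a n) atTop (𝓝 (∫ x, φ x ∂m₀ a)) := by
  obtain ⟨D, hDc, hDd⟩ := TopologicalSpace.exists_countable_dense C(M, ℝ)
  filter_upwards [(ae_ball_iff hDc).2 fun φ _ => h φ] with a ha
  exact hDd.induction ha <| (LipschitzWith.uniformEquicontinuous _ 1 fun n =>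
    lipschitzWith_integral_continuousMap (m a n)).equicontinuous.isClosed_setOfPred_tendsto
    (lipschitzWith_integral_continuousMap (m₀ a)).continuous

lemma ae_eq_of_forall_integral_eq {P : Measure α} {m₁ m₂ : α → Measure M}
    [∀ a, IsProbabilityMeasure (m₁ a)] [∀ a, IsProbabilityMeasure (m₂ a)]
    (h : ∀ φ : C(M, ℝ), ∀ᵐ a ∂P, ∫ x, φ x ∂m₁ a = ∫ x, φ x ∂m₂ a) :
    ∀ᵐ a ∂P, m₁ a = m₂ a := by
  obtain ⟨D, hDc, hDd⟩ := TopologicalSpace.exists_countable_dense C(M, ℝ)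
  filter_upwards [(ae_ball_iff hDc).2 fun φ _ => h φ] with a ha
  have hall : ∀ φ : C(M, ℝ), ∫ x, φ x ∂m₁ a = ∫ x, φ x ∂m₂ a :=
    hDd.induction ha (isClosed_eq (lipschitzWith_integral_continuousMap (m₁ a)).continuous
      (lipschitzWith_integral_continuousMap (m₂ a)).continuous)
  exact ext_of_forall_integral_eq_of_IsFiniteMeasure fun φ => hall φ.toContinuousMap

theorem exists_kernel_ae_eq_comp (κ : Kernel α M) [IsMarkovKernel κ] {P : Measure α}
    [IsProbabilityMeasure P] {π : α → β} (hπ : Measurable π)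
    (h : ∀ φ : C(M, ℝ), ∃ H : β → ℝ, Measurable H ∧ ∀ᵐ a ∂P, ∫ x, φ x ∂κ a = H (π a)) :
    ∃ ν : Kernel β M, IsMarkovKernel ν ∧ ∀ᵐ a ∂P, κ a = ν (π a) := by
  have : Nonempty M :=
    have ⟨a⟩ := nonempty_of_isProbabilityMeasure P
    nonempty_of_isProbabilityMeasure (κ a)
  refine ⟨((P ⊗ₘ κ).map fun p => (π p.1, p.2)).condKernel, inferInstance,
    ae_eq_of_forall_integral_eq fun φ => ?_⟩
  obtain ⟨H, hH, hae⟩ := h φ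
  filter_upwards [hae, ae_of_ae_map hπ.aemeasurable
    (integral_condKernel_map_compProd_ae_eq hπ φ.continuous.measurable φ.norm_coe_le_norm hH
      hae)] with a h₁ h₂
  exact h₁.trans h₂.symm

end ContinuousFunctions

section Compositions

def coordsFrom {Ω : Type*} (n : ℕ) (ω : ℤ → Ω) : ℕ → Ω :=
  fun j => ω (j + 1 - n)

variable {Ω M : Type*} [TopologicalSpace M] (f : Ω → M ≃ₜ M)

/-- The paper's `f^n_η = f_{η_n} ∘ ⋯ ∘ f_{η_1}`, for `η` indexed from `0`. -/
noncomputable def fwdIter (η : ℕ → Ω) : ℕ → M → M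
  | 0 => id
  | n + 1 => f (η n) ∘ fwdIter η n

lemma fwdIter_succ' (η : ℕ → Ω) (n : ℕ) :
    fwdIter f η (n + 1) = fwdIter f (fun j => η (j + 1)) n ∘ f (η 0) := by
  induction n with
  | zero => rfl
  | succ n ih => rw [fwdIter, ih]; rfl

lemma fwdPast_eq_fwdIter (ω : ℤ → Ω) (n : ℕ) :
    fwdPast f ω n = fwdIter f (coordsFrom n ω) n := by
  induction n with
  | zero => rfl
  | succ n ih =>
    rw [fwdPast, ih, fwdIter_succ']
    unfold coordsFrom
    congr 3
    · funext j; congr 1; push_cast; ring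
    · congr 1; push_cast; ring

lemma fwdPast_congr {ω ω' : ℤ → Ω} (h : ∀ k : ℕ, ω (-k) = ω' (-k)) (n : ℕ) :
    fwdPast f ω n = fwdPast f ω' n := by
  induction n with
  | zero => rfl
  | succ n ih => rw [fwdPast, fwdPast, ih, h]

lemma continuous_fwdPast (ω : ℤ → Ω) (n : ℕ) : Continuous (fwdPast f ω n) := by
  induction n with
  | zero => exact continuous_id
  | succ n ih => exact ih.comp (f _).continuous

variable [MeasurableSpace Ω] [MeasurableSpace M]

@[fun_prop]
lemma measurable_coordsFrom (n : ℕ) : Measurable (coordsFrom (Ω := Ω) n) :=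
  measurable_pi_lambda _ fun _ => measurable_pi_apply _

lemma measurable_fwdIter (hf : Measurable fun p : Ω × M => f p.1 p.2) (n : ℕ) :
    Measurable fun q : (ℕ → Ω) × M => fwdIter f q.1 n q.2 := by
  induction n with
  | zero => exact measurable_snd
  | succ n ih => exact hf.comp (((measurable_pi_apply n).comp measurable_fst).prodMk ih)

lemma measurable_integral_fwdPast (hf : Measurable fun p : Ω × M => f p.1 p.2) {μ : Measure M}
    [SFinite μ] {φ : M → ℝ} (hφ : Measurable φ) (n : ℕ) :
    Measurable fun ω => ∫ x, φ (fwdPast f ω n x) ∂μ := by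
  simp only [fwdPast_eq_fwdIter]
  exact (hφ.comp ((measurable_fwdIter f hf n).comp
    (((measurable_coordsFrom n).comp measurable_fst).prodMk measurable_snd))).stronglyMeasurable
    |>.integral_prod_right'.measurable

end Compositions

section SkewProduct

variable {Ω M : Type*} [TopologicalSpace M] (f : Ω → M ≃ₜ M)

def skewProduct (p : M × (ℤ → Ω)) : M × (ℤ → Ω) :=
  (f (p.2 1) p.1, fun k => p.2 (k + 1))

lemma skewProduct_iterate (n : ℕ) (x : M) (ω : ℤ → Ω) :
    (skewProduct f)^[n] (x, ω) = (fwdIter f (fun j => ω (j + 1)) n x, fun k => ω (k + n)) := by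
  induction n with
  | zero => simp [fwdIter]
  | succ n ih =>
    rw [Function.iterate_succ_apply', ih]
    refine Prod.ext ?_ (funext fun k => ?_)
    · change f (ω (1 + n)) _ = f (ω (n + 1)) _
      rw [add_comm]
    · change ω (k + 1 + n) = ω (k + (n + 1 : ℕ))
      push_cast; ring_nf

lemma coordsFrom_skewProduct_iterate (n : ℕ) (p : M × (ℤ → Ω)) :
    coordsFrom n ((skewProduct f)^[n] p).2 = fun j : ℕ => p.2 (j + 1) := by
  obtain ⟨x, ω⟩ := p
  funext j
  simp [skewProduct_iterate, coordsFrom]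

variable [MeasurableSpace Ω] [MeasurableSpace M]

lemma measurable_skewProduct (hf : Measurable fun p : Ω × M => f p.1 p.2) :
    Measurable (skewProduct f) := by
  unfold skewProduct
  fun_prop

/-- Transporting `μ*` along `τⁿ` turns the window `coordsFrom n` into the one-sided future. -/
lemma map_coordsFrom_eq_map_fwdIter (hf : Measurable fun p : Ω × M => f p.1 p.2)
    {μ : Measure M} [SFinite μ] {Pplus : Measure (ℕ → Ω)} [SFinite Pplus]
    {μstar : Measure (M × (ℤ → Ω))} (hinv : μstar.map (skewProduct f) = μstar)
    (hproj : μstar.map (fun p => (p.1, fun j : ℕ => p.2 (j + 1))) = μ.prod Pplus) (n : ℕ) :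
    μstar.map (fun p => (coordsFrom n p.2, p.1)) =
      (Pplus.prod μ).map fun q => (q.1, fwdIter f q.1 n q.2) := by
  have hT : MeasurePreserving (skewProduct f) μstar μstar := ⟨measurable_skewProduct f hf, hinv⟩
  have hproj_meas : Measurable fun p : M × (ℤ → Ω) => (p.1, fun j : ℕ => p.2 (j + 1)) :=
    measurable_fst.prodMk
      (measurable_pi_lambda _ fun j => (measurable_pi_apply _).comp measurable_snd)
  have hcomp : (fun p => (coordsFrom n p.2, p.1)) ∘ (skewProduct f)^[n] =
      (fun q : (ℕ → Ω) × M => (q.1, fwdIter f q.1 n q.2)) ∘ Prod.swap ∘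
        fun p : M × (ℤ → Ω) => (p.1, fun j : ℕ => p.2 (j + 1)) := by
    funext ⟨x, ω⟩
    simp only [Function.comp_apply, coordsFrom_skewProduct_iterate, Prod.swap_prod_mk]
    simp [skewProduct_iterate]
  rw [← (hT.iterate n).map_eq, Measure.map_map (by fun_prop) (hT.iterate n).measurable, hcomp,
    ← Measure.map_map (measurable_fst.prodMk (measurable_fwdIter f hf n))
      (measurable_swap.comp hproj_meas),
    ← Measure.map_map measurable_swap hproj_meas, hproj, Measure.prod_swap]

end SkewProduct

section Martingale

variable {Ω M : Type*} [MeasurableSpace Ω] [TopologicalSpace M] [MeasurableSpace M]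
  (f : Ω → M ≃ₜ M)

def coordsFiltration : Filtration ℕ (MeasurableSpace.pi : MeasurableSpace (ℤ → Ω)) where
  seq n := MeasurableSpace.comap (coordsFrom n) MeasurableSpace.pi
  mono' := monotone_nat_of_le_succ fun n => by
    have hshift : coordsFrom (Ω := Ω) n = (fun η j => η (j + 1)) ∘ coordsFrom (n + 1) := by
      funext ω j
      simp only [coordsFrom, Function.comp_apply]
      congr 1; push_cast; ring
    rw [hshift]
    exact ((measurable_pi_lambda (fun (η : ℕ → Ω) (j : ℕ) => η (j + 1)) fun j =>
      measurable_pi_apply _).comp (comap_measurable _)).comap_le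
  le' n := (measurable_coordsFrom n).comap_le

lemma iSup_coordsFiltration : ⨆ n, coordsFiltration (Ω := Ω) n = MeasurableSpace.pi := by
  refine le_antisymm (iSup_le coordsFiltration.le) (iSup_le fun k => ?_)
  set n := (1 - k).toNat
  have heval : (fun ω : ℤ → Ω => ω k) = (fun η => η (k + n - 1).toNat) ∘ coordsFrom n := by
    funext ω
    simp only [coordsFrom, Function.comp_apply]
    congr 1; omega
  refine le_trans ?_ (le_iSup _ n)
  rw [heval]
  exact ((measurable_pi_apply (k + n - 1).toNat).comp
    (comap_measurable (coordsFrom (Ω := Ω) n))).comap_le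

variable {Pz : Measure (ℤ → Ω)} [IsFiniteMeasure Pz] {Pplus : Measure (ℕ → Ω)}
  [IsFiniteMeasure Pplus] {μ : Measure M} [IsProbabilityMeasure μ]
  {κ : Kernel (ℤ → Ω) M} [IsMarkovKernel κ] {μstar : Measure (M × (ℤ → Ω))}
  {φ : M → ℝ} {C : ℝ}

lemma condExp_coordsFiltration_ae_eq (hf : Measurable fun p : Ω × M => f p.1 p.2)
    (hμstar : μstar = (Pz ⊗ₘ κ).map Prod.swap) (hinv : μstar.map (skewProduct f) = μstar)
    (hproj : μstar.map (fun p => (p.1, fun j : ℕ => p.2 (j + 1))) = μ.prod Pplus)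
    (hφ : Measurable φ) (hφC : ∀ x, ‖φ x‖ ≤ C) (n : ℕ) :
    Pz[fun ω => ∫ x, φ x ∂κ ω | coordsFiltration n] =ᵐ[Pz]
      fun ω => ∫ x, φ (fwdPast f ω n x) ∂μ := by
  have hlaw : (Pz ⊗ₘ κ).map (fun p => (coordsFrom n p.1, p.2)) =
      (Pplus.prod μ).map fun q => (q.1, fwdIter f q.1 n q.2) := by
    rw [← map_coordsFrom_eq_map_fwdIter f hf hinv hproj n, hμstar,
      Measure.map_map (g := fun p : M × (ℤ → Ω) => (coordsFrom n p.2, p.1)) (by fun_prop)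
        measurable_swap]
    rfl
  filter_upwards [condExp_integral_kernel_ae_eq (measurable_coordsFrom n)
    (measurable_fwdIter f hf n) hlaw hφ hφC] with ω hω
  rwa [fwdPast_eq_fwdIter]

theorem tendsto_integral_fwdPast_ae (hf : Measurable fun p : Ω × M => f p.1 p.2)
    (hμstar : μstar = (Pz ⊗ₘ κ).map Prod.swap) (hinv : μstar.map (skewProduct f) = μstar)
    (hproj : μstar.map (fun p => (p.1, fun j : ℕ => p.2 (j + 1))) = μ.prod Pplus)
    (hφ : Measurable φ) (hφC : ∀ x, ‖φ x‖ ≤ C) :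
    ∀ᵐ ω ∂Pz, Tendsto (fun n => ∫ x, φ (fwdPast f ω n x) ∂μ) atTop (𝓝 (∫ x, φ x ∂κ ω)) := by
  have hmeas : Measurable fun ω => ∫ x, φ x ∂κ ω :=
    hφ.stronglyMeasurable.integral_kernel.measurable
  have hmeas_sup : StronglyMeasurable[⨆ n, coordsFiltration n] fun ω => ∫ x, φ x ∂κ ω := by
    rw [iSup_coordsFiltration]
    exact hmeas.stronglyMeasurable
  have hint : Integrable (fun ω => ∫ x, φ x ∂κ ω) Pz :=
    .of_bound hmeas.aestronglyMeasurable C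
      (.of_forall fun ω => norm_integral_le_of_forall_norm_le hφC)
  filter_upwards [hint.tendsto_ae_condExp hmeas_sup, ae_all_iff.2 fun n =>
    condExp_coordsFiltration_ae_eq f hf hμstar hinv hproj hφ hφC n] with ω hlim hce
  exact hlim.congr hce

-- `fwdPast f ω n` reads only the past of `ω`, which `y ↦ (k ↦ y (-k).toNat)` reconstructs.
theorem exists_integral_ae_eq_comp_past (hf : Measurable fun p : Ω × M => f p.1 p.2)
    (hμstar : μstar = (Pz ⊗ₘ κ).map Prod.swap) (hinv : μstar.map (skewProduct f) = μstar)
    (hproj : μstar.map (fun p => (p.1, fun j : ℕ => p.2 (j + 1))) = μ.prod Pplus)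
    (hφ : Measurable φ) (hφC : ∀ x, ‖φ x‖ ≤ C) :
    ∃ H : (ℕ → Ω) → ℝ, Measurable H ∧ ∀ᵐ ω ∂Pz, ∫ x, φ x ∂κ ω = H fun n => ω (-(n : ℤ)) := by
  refine ⟨fun y => limsup (fun n => ∫ x, φ (fwdPast f (fun k => y (-k).toNat) n x) ∂μ) atTop,
    .limsup fun n => (measurable_integral_fwdPast f hf hφ n).comp
      (measurable_pi_lambda _ fun _ => measurable_pi_apply _),
    (tendsto_integral_fwdPast_ae f hf hμstar hinv hproj hφ hφC).mono fun ω hω => ?_⟩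
  simp only [fwdPast_congr f (ω := fun k => ω (-((-k).toNat : ℤ))) (ω' := ω) (by simp)]
  exact hω.limsup_eq.symm

end Martingale

theorem sample_measures_weak_limit_and_past_measurable_general
    {Ω M : Type*} [MeasurableSpace Ω]
    [MetricSpace M] [CompactSpace M] [MeasurableSpace M] [BorelSpace M]
    (f : Ω → Homeomorph M M)
    (hf : Measurable fun p : Ω × M => f p.1 p.2)
    (P : Measure Ω)
    (Pplus : Measure (ℕ → Ω)) (hPplus : IsIIDProduct ℕ P Pplus)
    (Pz : Measure (ℤ → Ω)) (hPz : IsIIDProduct ℤ P Pz)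
    (μ : Measure M) [IsProbabilityMeasure μ]
    (μstar : Measure (M × (ℤ → Ω)))
    (hinv : Measure.map (fun p : M × (ℤ → Ω) => ((f (p.2 1)) p.1, fun k => p.2 (k + 1)))
        μstar = μstar)
    (hproj : Measure.map (fun p : M × (ℤ → Ω) => (p.1, fun n : ℕ => p.2 ((n : ℤ) + 1)))
        μstar = μ.prod Pplus)
    (μω : (ℤ → Ω) → Measure M)
    (hμω_prob : ∀ ω, IsProbabilityMeasure (μω ω))
    (hμω_meas : Measurable μω)
    (hdisint : ∀ A : Set (M × (ℤ → Ω)), MeasurableSet A →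
      μstar A = ∫⁻ ω, (μω ω) {x : M | (x, ω) ∈ A} ∂Pz) :
    (∀ᵐ ω ∂Pz, ∀ φ : M → ℝ, Continuous φ →
      Tendsto (fun n : ℕ => ∫ x, φ x ∂(Measure.map (fwdPast f ω n) μ)) atTop
        (nhds (∫ x, φ x ∂(μω ω)))) ∧
    ∃ ν : (ℕ → Ω) → Measure M,
      Measurable ν ∧ (∀ y, IsProbabilityMeasure (ν y)) ∧
      ∀ᵐ ω ∂Pz, μω ω = ν (fun n : ℕ => ω (-(n : ℤ))) := by
  have := hPz.1
  have := hPplus.1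
  let κ : Kernel (ℤ → Ω) M := ⟨μω, hμω_meas⟩
  have : IsMarkovKernel κ := ⟨hμω_prob⟩
  have hμstar := eq_map_swap_compProd (κ := κ) hdisint
  have hlim (φ : C(M, ℝ)) : ∀ᵐ ω ∂Pz,
      Tendsto (fun n => ∫ x, φ (fwdPast f ω n x) ∂μ) atTop (𝓝 (∫ x, φ x ∂μω ω)) :=
    tendsto_integral_fwdPast_ae f hf hμstar hinv hproj φ.continuous.measurable φ.norm_coe_le_norm
  constructor
  · have hmap (ω : ℤ → Ω) (n : ℕ) (φ : C(M, ℝ)) :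
        ∫ x, φ x ∂μ.map (fwdPast f ω n) = ∫ x, φ (fwdPast f ω n x) ∂μ :=
      integral_map (continuous_fwdPast f ω n).aemeasurable φ.continuous.aestronglyMeasurable
    filter_upwards [ae_forall_tendsto_integral (m := fun ω n => μ.map (fwdPast f ω n))
      (fun ω n => Measure.isProbabilityMeasure_map (continuous_fwdPast f ω n).aemeasurable)
      fun φ => by simpa only [hmap] using hlim φ] with ω hω φ hφ
    exact hω ⟨φ, hφ⟩
  · obtain ⟨ν, hν, hae⟩ := exists_kernel_ae_eq_comp κ
      (measurable_pi_lambda _ fun _ => measurable_pi_apply _) fun φ =>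
        exists_integral_ae_eq_comp_past f hf hμstar hinv hproj φ.continuous.measurable
          φ.norm_coe_le_norm
    exact ⟨ν, ν.measurable, fun y => inferInstance, hae⟩

/-- For `ℙ`-a.e. `ω`, the pushforwards `(f^n_{θ^{-n}ω})_* μ` converge weakly to the
sample measure `μ_ω`; consequently `μ_ω` depends a.s. only on the past coordinates
`(ω_n)_{n ≤ 0}` (modelled as `ℕ → Ω` via `n ↦ ω_{-n}`). -/
theorem sample_measures_weak_limit_and_past_measurable
    {Ω M : Type*} [TopologicalSpace Ω] [PolishSpace Ω] [MeasurableSpace Ω] [BorelSpace Ω]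
    [MetricSpace M] [CompactSpace M] [MeasurableSpace M] [BorelSpace M]
    (f : Ω → Homeomorph M M)
    (hf : Measurable fun p : Ω × M => f p.1 p.2)
    (hfinv : Measurable fun p : Ω × M => (f p.1).symm p.2)
    (P : Measure Ω) [IsProbabilityMeasure P]
    (Pplus : Measure (ℕ → Ω)) (hPplus : IsIIDProduct ℕ P Pplus)
    (Pz : Measure (ℤ → Ω)) (hPz : IsIIDProduct ℤ P Pz)
    (μ : Measure M) [IsProbabilityMeasure μ]
    (hstat : ∀ E : Set M, MeasurableSet E → μ E = ∫⁻ ω, μ ((f ω) ⁻¹' E) ∂P)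
    (μstar : Measure (M × (ℤ → Ω))) [IsProbabilityMeasure μstar]
    (hinv : Measure.map (fun p : M × (ℤ → Ω) => ((f (p.2 1)) p.1, fun k => p.2 (k + 1)))
        μstar = μstar)
    (hproj : Measure.map (fun p : M × (ℤ → Ω) => (p.1, fun n : ℕ => p.2 ((n : ℤ) + 1)))
        μstar = μ.prod Pplus)
    (μω : (ℤ → Ω) → Measure M)
    (hμω_prob : ∀ ω, IsProbabilityMeasure (μω ω))
    (hμω_meas : Measurable μω)
    (hdisint : ∀ A : Set (M × (ℤ → Ω)), MeasurableSet A →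
      μstar A = ∫⁻ ω, (μω ω) {x : M | (x, ω) ∈ A} ∂Pz) :
    (∀ᵐ ω ∂Pz, ∀ φ : M → ℝ, Continuous φ →
      Tendsto (fun n : ℕ => ∫ x, φ x ∂(Measure.map (fwdPast f ω n) μ)) atTop
        (nhds (∫ x, φ x ∂(μω ω)))) ∧
    ∃ ν : (ℕ → Ω) → Measure M,
      Measurable ν ∧ (∀ y, IsProbabilityMeasure (ν y)) ∧
      ∀ᵐ ω ∂Pz, μω ω = ν (fun n : ℕ => ω (-(n : ℤ))) :=
  sample_measures_weak_limit_and_past_measurable_general f hf P Pplus hPplus Pz hPz μ μstar hinv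
    hproj μω hμω_prob hμω_meas hdisint
end

section
/- Let X and Y be Polish spaces, let G ⊂ X × Y be a compact subset, and let G_X denote the projection of G onto X. Then there exists a Borel measurable map ψ : G_X → Y with the property that (x, ψ(x)) ∈ G for every x ∈ G_X. -/
/-!
Embed `Y` continuously and injectively into `ℕ → ℝ` and select, over each `x`, the point of the
compact fiber `G_x` whose image is lexicographically least; it exists by a nested compact sets
argument. Coordinate `n` of the selection is at most `c` iff some point of `G_x` lies below the
selection in the earlier coordinates and has coordinate `n` at most `c`. Projecting along the
compact factor, this is a closed condition on `x` and those earlier coordinates, so by induction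
every coordinate is Borel, and so is the selection because the embedding is a measurable embedding.
-/

open Set

theorem Pi.apply_le_of_toLex_of_forall_lt_ge {ι : Type*} {β : ι → Type*} [LinearOrder ι]
    [WellFoundedLT ι] [∀ i, LinearOrder (β i)] {x y : ∀ i, β i} {i : ι}
    (hxy : toLex x ≤ toLex y) (h : ∀ j < i, y j ≤ x j) : x i ≤ y i := by
  have heq : ∀ j < i, x j = y j := by
    intro j
    induction j using WellFoundedLT.induction with
    | _ j ih =>
      exact fun hj => le_antisymm (Pi.apply_le_of_toLex hxy fun k hk => ih k hk (hk.trans hj))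
        (h j hj)
  exact Pi.apply_le_of_toLex hxy heq

theorem IsClosed.isClosed_image_fst_of_isCompact {Z Y : Type*} [TopologicalSpace Z]
    [TopologicalSpace Y] {C : Set (Z × Y)} {K : Set Y} (hC : IsClosed C) (hK : IsCompact K)
    (hCK : Prod.snd '' C ⊆ K) : IsClosed (Prod.fst '' C) := by
  have : CompactSpace K := isCompact_iff_compactSpace.mp hK
  have hC' : IsClosed {p : Z × K | (p.1, (p.2 : Y)) ∈ C} :=
    hC.preimage (continuous_fst.prodMk (continuous_subtype_val.comp continuous_snd))
  convert isClosedMap_fst_of_compactSpace _ hC' using 1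
  ext z
  constructor
  · rintro ⟨⟨z, y⟩, hzy, rfl⟩
    exact ⟨(z, ⟨y, hCK ⟨_, hzy, rfl⟩⟩), hzy, rfl⟩
  · rintro ⟨⟨z, y⟩, hzy, rfl⟩
    exact ⟨_, hzy, rfl⟩

section LexLeast

variable {α : Type*} [LinearOrder α] {K : Set (ℕ → α)}

def lexMinStage (K : Set (ℕ → α)) : ℕ → Set (ℕ → α)
  | 0 => K
  | n + 1 => {z ∈ lexMinStage K n | ∀ w ∈ lexMinStage K n, z n ≤ w n}

theorem lexMinStage_succ_subset (n : ℕ) : lexMinStage K (n + 1) ⊆ lexMinStage K n :=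
  fun _ hz => hz.1

variable [TopologicalSpace α] [OrderClosedTopology α]

theorem isCompact_lexMinStage (hK : IsCompact K) : ∀ n, IsCompact (lexMinStage K n)
  | 0 => hK
  | n + 1 => by
    have hstage : lexMinStage K (n + 1) =
        lexMinStage K n ∩ ⋂ w ∈ lexMinStage K n, {z | z n ≤ w n} := by
      ext z
      simp [lexMinStage]
    rw [hstage]
    exact (isCompact_lexMinStage hK n).inter_right
      (isClosed_biInter fun w _ => isClosed_le (continuous_apply n) continuous_const)

theorem lexMinStage_nonempty (hK : IsCompact K) (hne : K.Nonempty) :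
    ∀ n, (lexMinStage K n).Nonempty
  | 0 => hne
  | n + 1 => by
    obtain ⟨z, hz, hmin⟩ := (isCompact_lexMinStage hK n).exists_isMinOn
      (lexMinStage_nonempty hK hne n) (continuous_apply n).continuousOn
    exact ⟨z, hz, isMinOn_iff.mp hmin⟩

theorem IsCompact.exists_forall_toLex_le (hK : IsCompact K) (hne : K.Nonempty) :
    ∃ z ∈ K, ∀ w ∈ K, toLex z ≤ toLex w := by
  obtain ⟨z, hz⟩ := IsCompact.nonempty_iInter_of_sequence_nonempty_isCompact_isClosed _
    lexMinStage_succ_subset (lexMinStage_nonempty hK hne) hK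
    fun n => (isCompact_lexMinStage hK n).isClosed
  rw [mem_iInter] at hz
  refine ⟨z, hz 0, fun w hw => not_lt.mp fun ⟨k, hagree, hlt⟩ => ?_⟩
  -- `w` agrees with `z` before `k`, so it survives every stage up to `k`.
  have hw_stage : ∀ j ≤ k, w ∈ lexMinStage K j := by
    intro j
    induction j with
    | zero => exact fun _ => hw
    | succ j ih =>
      intro hj
      refine ⟨ih (by omega), fun v hv => ?_⟩
      rw [show w j = z j from hagree j (by omega)]
      exact (hz (j + 1)).2 v hv
  exact hlt.not_ge ((hz (k + 1)).2 w (hw_stage k le_rfl))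

end LexLeast

theorem exists_continuous_injective_nat_real (Y : Type*) [TopologicalSpace Y] [T3Space Y]
    [SecondCountableTopology Y] : ∃ a : Y → ℕ → ℝ, Continuous a ∧ Function.Injective a := by
  obtain ⟨f, hf⟩ := TopologicalSpace.exists_embedding_l_infty Y
  exact ⟨fun y => f y, continuous_pi fun n => (continuous_eval_const n).comp hf.continuous,
    DFunLike.coe_injective.comp hf.injective⟩

section LexLeastSelection

variable {X Y : Type*} [TopologicalSpace X] [TopologicalSpace Y] {G : Set (X × Y)}
  {a : Y → ℕ → ℝ}

theorem IsCompact.exists_forall_fiber_toLex_le [T1Space X] (hG : IsCompact G) (ha : Continuous a)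
    {x : X} (hx : x ∈ Prod.fst '' G) :
    ∃ y, (x, y) ∈ G ∧ ∀ y', (x, y') ∈ G → toLex (a y) ≤ toLex (a y') := by
  have hfiber : IsCompact ((a ∘ Prod.snd) '' (G ∩ Prod.fst ⁻¹' {x})) :=
    (hG.inter_right (isClosed_singleton.preimage continuous_fst)).image (ha.comp continuous_snd)
  obtain ⟨q, hq, rfl⟩ := hx
  obtain ⟨_, ⟨p, ⟨hp, hpq⟩, rfl⟩, hmin⟩ :=
    hfiber.exists_forall_toLex_le ⟨_, ⟨q, ⟨hq, rfl⟩, rfl⟩⟩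
  refine ⟨p.2, ?_, fun y' hy' => hmin _ ⟨(q.1, y'), ⟨hy', rfl⟩, rfl⟩⟩
  rwa [← show p.1 = q.1 from hpq]

theorem IsCompact.isClosed_setOf_exists_lexBound [T2Space X] [T2Space Y] (hG : IsCompact G)
    (ha : Continuous a) (n : ℕ) (c : ℝ) :
    IsClosed {p : X × (ℕ → ℝ) | ∃ y, (p.1, y) ∈ G ∧ (∀ i < n, a y i ≤ p.2 i) ∧ a y n ≤ c} := by
  have hcoord : ∀ i, Continuous fun q : (X × (ℕ → ℝ)) × Y => a q.2 i :=
    fun i => (continuous_apply i).comp (ha.comp continuous_snd)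
  have hC : IsClosed ({q : (X × (ℕ → ℝ)) × Y | (q.1.1, q.2) ∈ G} ∩
      (⋂ i < n, {q | a q.2 i ≤ q.1.2 i}) ∩ {q | a q.2 n ≤ c}) :=
    ((hG.isClosed.preimage (by fun_prop)).inter (isClosed_biInter fun i _ =>
      isClosed_le (hcoord i) ((continuous_apply i).comp (continuous_snd.comp continuous_fst)))).inter
      (isClosed_le (hcoord n) continuous_const)
  convert hC.isClosed_image_fst_of_isCompact (hG.image continuous_snd)
    (by rintro _ ⟨q, hq, rfl⟩; exact ⟨_, hq.1.1, rfl⟩) using 1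
  ext ⟨x, t⟩
  simp [and_assoc]

theorem measurable_apply_of_forall_toLex_le [T2Space X] [T2Space Y] [MeasurableSpace X]
    [OpensMeasurableSpace X] (hG : IsCompact G) (ha : Continuous a)
    {ψ : {x : X // x ∈ Prod.fst '' G} → Y} (hψG : ∀ x : {x : X // x ∈ Prod.fst '' G}, ((x : X), ψ x) ∈ G)
    (hψmin : ∀ (x : {x : X // x ∈ Prod.fst '' G}) y, ((x : X), y) ∈ G → toLex (a (ψ x)) ≤ toLex (a y)) (n : ℕ) :
    Measurable fun x => a (ψ x) n := by
  induction n using Nat.strong_induction_on with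
  | _ n ih =>
  refine measurable_of_Iic fun c => ?_
  let bounds : {x : X // x ∈ Prod.fst '' G} → X × (ℕ → ℝ) :=
    fun x => (x, fun i => if i < n then a (ψ x) i else 0)
  have hbounds : Measurable bounds := by
    refine measurable_subtype_coe.prodMk (measurable_pi_lambda _ fun i => ?_)
    by_cases hi : i < n
    · simpa [hi] using ih i hi
    · simp [hi]
  convert hbounds (hG.isClosed_setOf_exists_lexBound ha n c).measurableSet using 1
  ext x
  simp only [mem_preimage, mem_Iic, mem_ofPred_eq, bounds]
  constructor
  · exact fun hc => ⟨ψ x, hψG x, fun i hi => by simp [hi], hc⟩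
  · rintro ⟨y, hy, hle, hyc⟩
    refine le_trans (Pi.apply_le_of_toLex_of_forall_lt_ge (hψmin x y hy) fun i hi => ?_) hyc
    simpa [hi] using hle i hi

end LexLeastSelection

/-- Measurable selection: if `G ⊂ X × Y` is compact (with `X`, `Y` Polish) and `G_X` is its
projection onto `X`, then there is a Borel measurable map `ψ : G_X → Y` with
`(x, ψ x) ∈ G` for every `x ∈ G_X`. -/
theorem measurable_selection_of_compact
    {X Y : Type*} [TopologicalSpace X] [PolishSpace X] [MeasurableSpace X] [BorelSpace X]
    [TopologicalSpace Y] [PolishSpace Y] [MeasurableSpace Y] [BorelSpace Y]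
    (G : Set (X × Y)) (hG : IsCompact G) :
    ∃ ψ : {x : X // x ∈ Prod.fst '' G} → Y,
      Measurable ψ ∧ ∀ x : {x : X // x ∈ Prod.fst '' G}, ((x : X), ψ x) ∈ G := by
  obtain ⟨a, ha, ha_inj⟩ := exists_continuous_injective_nat_real Y
  choose ψ hψG hψmin using fun x : {x : X // x ∈ Prod.fst '' G} =>
    hG.exists_forall_fiber_toLex_le ha x.2
  refine ⟨ψ, ?_, hψG⟩
  rw [← (ha.measurableEmbedding ha_inj).measurable_comp_iff]
  exact measurable_pi_lambda _ (measurable_apply_of_forall_toLex_le hG ha hψG hψmin)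
end

section
/- There exist compact sets Δ₁ ⊃ Δ₂ ⊃ ⋯ in X such that: (i) each Δ_m is a union of finitely many pairwise disjoint compact sets Δ_{m,1}, …, Δ_{m,K_m}, each of which is contained in a single cell of Q_m; (ii) the pieces are nested, i.e., each Δ_{m+1,k} is contained in some Δ_{m,k'}; and (iii) ν(∩_{m≥1} Δ_m) ≥ ν(X)/2. -/
open MeasureTheory Filter
open scoped ENNReal Topology

section AuxNested

variable {X : Type*} [MetricSpace X] [CompactSpace X] [MeasurableSpace X] [BorelSpace X]

/-- Shrinking step: a finite disjoint family of measurable sets can be replaced by a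
finite disjoint family of compact subsets with total measure loss at most `ε`. -/
lemma nested_compact_substacks_shrink (ν : Measure X) [IsFiniteMeasure ν]
    (S : Finset (Set X)) (hmeas : ∀ s ∈ S, MeasurableSet s)
    (hdisj : ∀ s ∈ S, ∀ t ∈ S, s ≠ t → Disjoint s t)
    {ε : ℝ≥0∞} (hε : ε ≠ 0) :
    ∃ D : Finset (Set X),
      (∀ d ∈ D, IsCompact d) ∧
      (∀ d ∈ D, ∀ e ∈ D, d ≠ e → Disjoint d e) ∧
      (∀ d ∈ D, ∃ s ∈ S, d ⊆ s) ∧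
      ν (⋃ s ∈ S, s) ≤ ν (⋃ d ∈ D, (d : Set X)) + ε := by
  classical
  rcases S.eq_empty_or_nonempty with rfl | hSne
  · exact ⟨∅, by simp, by simp, by simp, by simp⟩
  have hcard : (S.card : ℝ≥0∞) ≠ 0 := by
    simpa using Finset.card_ne_zero_of_mem hSne.choose_spec
  have hε' : ε / (S.card : ℝ≥0∞) ≠ 0 := by
    simp [ENNReal.div_eq_top, ENNReal.div_eq_zero_iff, hε, ENNReal.natCast_ne_top]
  have H : ∀ s ∈ S, ∃ K, K ⊆ s ∧ IsCompact K ∧ ν (s \ K) < ε / S.card := fun s hs =>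
    (hmeas s hs).exists_isCompact_diff_lt (measure_ne_top ν s) hε'
  choose! f hf1 hf2 hf3 using H
  refine ⟨S.image f, ?_, ?_, ?_, ?_⟩
  · intro d hd
    obtain ⟨s, hs, rfl⟩ := Finset.mem_image.1 hd
    exact hf2 s hs
  · intro d hd e he hde
    obtain ⟨s, hs, rfl⟩ := Finset.mem_image.1 hd
    obtain ⟨t, ht, rfl⟩ := Finset.mem_image.1 he
    have hst : s ≠ t := fun h => hde (by rw [h])
    exact (hdisj s hs t ht hst).mono (hf1 s hs) (hf1 t ht)
  · intro d hd
    obtain ⟨s, hs, rfl⟩ := Finset.mem_image.1 hd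
    exact ⟨s, hs, hf1 s hs⟩
  · have hsub : (⋃ s ∈ S, s) ⊆
        (⋃ d ∈ S.image f, (d : Set X)) ∪ ⋃ s ∈ S, (s \ f s) := by
      intro x hx
      simp only [Set.mem_iUnion, exists_prop] at hx
      obtain ⟨s, hs, hxs⟩ := hx
      by_cases hxf : x ∈ f s
      · exact Or.inl (Set.mem_biUnion (Finset.mem_image_of_mem f hs) hxf)
      · exact Or.inr (Set.mem_biUnion hs ⟨hxs, hxf⟩)
    calc ν (⋃ s ∈ S, s) ≤ ν ((⋃ d ∈ S.image f, (d : Set X)) ∪ ⋃ s ∈ S, (s \ f s)) :=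
          measure_mono hsub
      _ ≤ ν (⋃ d ∈ S.image f, (d : Set X)) + ν (⋃ s ∈ S, (s \ f s)) := measure_union_le _ _
      _ ≤ ν (⋃ d ∈ S.image f, (d : Set X)) + ε := by
          gcongr
          calc ν (⋃ s ∈ S, (s \ f s)) ≤ ∑ s ∈ S, ν (s \ f s) :=
                measure_biUnion_finset_le S _
            _ ≤ ∑ _s ∈ S, ε / S.card := Finset.sum_le_sum fun s hs => (hf3 s hs).le
            _ = S.card * (ε / S.card) := by rw [Finset.sum_const, nsmul_eq_mul]
            _ ≤ ε := ENNReal.mul_div_le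

end AuxNested

/-- Lemma 6.1 (nested compact substacks, measure-theoretic core): given an increasing
sequence of finite Borel partitions `Q_m` of a compact metric space `X` carrying a
finite Borel measure `ν`, there are nested compact sets `Δ₁ ⊃ Δ₂ ⊃ ⋯`, each a finite
disjoint union of compact pieces subordinate to the cells of `Q_m`, with nested pieces,
such that `ν(∩_m Δ_m) ≥ ν(X)/2`. -/
theorem nested_compact_substacks
    {X : Type*} [MetricSpace X] [CompactSpace X] [MeasurableSpace X] [BorelSpace X]
    (ν : Measure X) [IsFiniteMeasure ν]
    (Q : ℕ → Finset (Set X))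
    (hQmeas : ∀ m, ∀ s ∈ Q m, MeasurableSet s)
    (hQdisj : ∀ m, ∀ s ∈ Q m, ∀ t ∈ Q m, s ≠ t → Disjoint s t)
    (hQcover : ∀ m, ⋃ s ∈ Q m, s = Set.univ)
    (hQrefine : ∀ m, ∀ s ∈ Q (m + 1), ∃ t ∈ Q m, s ⊆ t)
    (c : ℕ → ℝ) (hc : ∀ m, c m ∈ Set.Ioo (0 : ℝ) 1) (hprod : ∏' m, c m = 1 / 2) :
    ∃ D : ℕ → Finset (Set X),
      (∀ m, ∀ s ∈ D m, IsCompact s) ∧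
      (∀ m, ∀ s ∈ D m, ∀ t ∈ D m, s ≠ t → Disjoint s t) ∧
      (∀ m, ∀ s ∈ D m, ∃ q ∈ Q m, s ⊆ q) ∧
      (∀ m, ∀ s ∈ D (m + 1), ∃ t ∈ D m, s ⊆ t) ∧
      (∀ m, (⋃ s ∈ D (m + 1), (s : Set X)) ⊆ ⋃ s ∈ D m, (s : Set X)) ∧
      ν Set.univ / 2 ≤ ν (⋂ m, ⋃ s ∈ D m, (s : Set X)) := by
  classical
  -- trivial case of the zero measure
  by_cases hA0 : ν Set.univ = 0
  · refine ⟨fun _ => ∅, by simp, by simp, by simp, by simp, by simp, ?_⟩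
    simp [hA0]
  set A : ℝ≥0∞ := ν Set.univ with hAdef
  have hAtop : A ≠ ∞ := measure_ne_top ν _
  -- partial products
  set p : ℕ → ℝ := fun m => ∏ i ∈ Finset.range m, c i with hpdef
  have hp_pos : ∀ m, 0 < p m := fun m => Finset.prod_pos fun i _ => (hc i).1
  have hp_succ : ∀ m, p (m + 1) = p m * c m := fun m => Finset.prod_range_succ c m
  -- error budgets
  set ε : ℕ → ℝ≥0∞ := fun m => A * ENNReal.ofReal (p m * (1 - c m)) with hεdef
  have hε0 : ∀ m, ε m ≠ 0 := by
    intro m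
    have hx : 0 < p m * (1 - c m) := mul_pos (hp_pos m) (by linarith [(hc m).2])
    exact mul_ne_zero hA0 (ENNReal.ofReal_pos.2 hx).ne'
  have hεtop : ∀ m, ε m ≠ ∞ := fun m =>
    ENNReal.mul_ne_top hAtop ENNReal.ofReal_ne_top
  -- the key splitting identity
  have hsplit : ∀ m, A * ENNReal.ofReal (p m) = A * ENNReal.ofReal (p (m + 1)) + ε m := by
    intro m
    have h1 : p m = p (m + 1) + p m * (1 - c m) := by rw [hp_succ m]; ring
    rw [hεdef]
    rw [← mul_add, ← ENNReal.ofReal_add (hp_pos (m + 1)).le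
      (mul_nonneg (hp_pos m).le (by linarith [(hc m).2])), ← h1]
  -- the invariant
  set P : ℕ → Finset (Set X) → Prop := fun m D =>
    (∀ s ∈ D, IsCompact s) ∧
    (∀ s ∈ D, ∀ t ∈ D, s ≠ t → Disjoint s t) ∧
    (∀ s ∈ D, ∃ q ∈ Q m, s ⊆ q) ∧
    A * ENNReal.ofReal (p (m + 1)) ≤ ν (⋃ s ∈ D, (s : Set X)) with hPdef
  -- base case
  have base : ∃ D, P 0 D := by
    obtain ⟨D, h1, h2, h3, h4⟩ := nested_compact_substacks_shrink ν (Q 0)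
      (hQmeas 0) (hQdisj 0) (hε0 0)
    refine ⟨D, h1, h2, h3, ?_⟩
    rw [hQcover 0] at h4
    have hA1 : A * ENNReal.ofReal (p 0) = A := by
      simp [hpdef]
    have hkey : A * ENNReal.ofReal (p (0 + 1)) + ε 0 ≤ ν (⋃ s ∈ D, (s : Set X)) + ε 0 := by
      have h01 := hsplit 0
      rw [hA1] at h01
      rw [← h01]
      exact h4
    exact (ENNReal.add_le_add_iff_right (hεtop 0)).1 hkey
  -- inductive step
  have ind : ∀ m (D : Finset (Set X)), P m D →
      ∃ D', P (m + 1) D' ∧ ∀ s ∈ D', ∃ t ∈ D, s ⊆ t := by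
    intro m D hD
    obtain ⟨hDcomp, hDdisj, hDsub, hDmeas⟩ := hD
    set S : Finset (Set X) :=
      Finset.image (fun pr : Set X × Set X => pr.1 ∩ pr.2) (D ×ˢ Q (m + 1)) with hSdef
    have hSmem : ∀ s ∈ S, ∃ K ∈ D, ∃ q ∈ Q (m + 1), s = K ∩ q := by
      intro s hs
      obtain ⟨⟨K, q⟩, hKq, rfl⟩ := Finset.mem_image.1 hs
      obtain ⟨hK, hq⟩ := Finset.mem_product.1 hKq
      exact ⟨K, hK, q, hq, rfl⟩
    have hSmeas : ∀ s ∈ S, MeasurableSet s := by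
      intro s hs
      obtain ⟨K, hK, q, hq, rfl⟩ := hSmem s hs
      exact ((hDcomp K hK).isClosed.measurableSet).inter (hQmeas (m + 1) q hq)
    have hSdisj : ∀ s ∈ S, ∀ t ∈ S, s ≠ t → Disjoint s t := by
      intro s hs t ht hst
      obtain ⟨K₁, hK₁, q₁, hq₁, rfl⟩ := hSmem s hs
      obtain ⟨K₂, hK₂, q₂, hq₂, rfl⟩ := hSmem t ht
      by_cases hK : K₁ = K₂
      · have hq : q₁ ≠ q₂ := fun h => hst (by rw [hK, h])
        exact ((hQdisj (m + 1) q₁ hq₁ q₂ hq₂ hq).mono Set.inter_subset_right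
          Set.inter_subset_right)
      · exact ((hDdisj K₁ hK₁ K₂ hK₂ hK).mono Set.inter_subset_left Set.inter_subset_left)
    have hSunion : (⋃ s ∈ S, (s : Set X)) = ⋃ s ∈ D, (s : Set X) := by
      apply Set.Subset.antisymm
      · refine Set.iUnion₂_subset fun s hs => ?_
        obtain ⟨K, hK, q, hq, rfl⟩ := hSmem s hs
        exact fun x hx => Set.mem_biUnion hK (Set.inter_subset_left hx)
      · intro x hx
        simp only [Set.mem_iUnion, exists_prop] at hx
        obtain ⟨K, hK, hxK⟩ := hx
        have hxq : x ∈ ⋃ q ∈ Q (m + 1), q := by rw [hQcover (m + 1)]; trivial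
        simp only [Set.mem_iUnion, exists_prop] at hxq
        obtain ⟨q, hq, hxq⟩ := hxq
        have hKq : K ∩ q ∈ S := by
          rw [hSdef]
          have hpair : (K, q) ∈ D ×ˢ Q (m + 1) := Finset.mem_product.2 ⟨hK, hq⟩
          exact Finset.mem_image_of_mem (fun pr : Set X × Set X => pr.1 ∩ pr.2) hpair
        exact Set.mem_biUnion hKq ⟨hxK, hxq⟩
    obtain ⟨D', h1, h2, h3, h4⟩ := nested_compact_substacks_shrink ν S hSmeas hSdisj
      (hε0 (m + 1))
    rw [hSunion] at h4
    have hmeas' : A * ENNReal.ofReal (p (m + 2)) ≤ ν (⋃ d ∈ D', (d : Set X)) := by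
      have key : A * ENNReal.ofReal (p (m + 2)) + ε (m + 1) ≤
          ν (⋃ d ∈ D', (d : Set X)) + ε (m + 1) := by
        rw [← hsplit (m + 1)]
        exact le_trans hDmeas h4
      exact (ENNReal.add_le_add_iff_right (hεtop (m + 1))).1 key
    have hsubQ : ∀ d ∈ D', ∃ q ∈ Q (m + 1), d ⊆ q := by
      intro d hd
      obtain ⟨s, hs, hds⟩ := h3 d hd
      obtain ⟨K, hK, q, hq, rfl⟩ := hSmem s hs
      exact ⟨q, hq, hds.trans Set.inter_subset_right⟩
    have hsubD : ∀ d ∈ D', ∃ t ∈ D, d ⊆ t := by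
      intro d hd
      obtain ⟨s, hs, hds⟩ := h3 d hd
      obtain ⟨K, hK, q, hq, rfl⟩ := hSmem s hs
      exact ⟨K, hK, hds.trans Set.inter_subset_left⟩
    exact ⟨D', ⟨h1, h2, hsubQ, hmeas'⟩, hsubD⟩
  -- build the sequence by recursion with choice
  let step : ∀ m, { D : Finset (Set X) // P m D } → { D : Finset (Set X) // P (m + 1) D } :=
    fun m d => ⟨(ind m d.1 d.2).choose, (ind m d.1 d.2).choose_spec.1⟩
  let F : ∀ m, { D : Finset (Set X) // P m D } :=
    fun m => Nat.rec ⟨base.choose, base.choose_spec⟩ step m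
  have hFsucc : ∀ m, F (m + 1) = step m (F m) := fun m => rfl
  set D : ℕ → Finset (Set X) := fun m => (F m).1 with hDdef
  have hP : ∀ m, P m (D m) := fun m => (F m).2
  have hnest : ∀ m, ∀ s ∈ D (m + 1), ∃ t ∈ D m, s ⊆ t := by
    intro m s hs
    have : D (m + 1) = (ind m (F m).1 (F m).2).choose := rfl
    rw [this] at hs
    exact (ind m (F m).1 (F m).2).choose_spec.2 s hs
  have hUnest : ∀ m, (⋃ s ∈ D (m + 1), (s : Set X)) ⊆ ⋃ s ∈ D m, (s : Set X) := by
    intro m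
    refine Set.iUnion₂_subset fun s hs => ?_
    obtain ⟨t, ht, hst⟩ := hnest m s hs
    exact fun x hx => Set.mem_biUnion ht (hst hx)
  refine ⟨D, fun m => (hP m).1, fun m => (hP m).2.1, fun m => (hP m).2.2.1, hnest, hUnest, ?_⟩
  -- the measure of the intersection
  set U : ℕ → Set X := fun m => ⋃ s ∈ D m, (s : Set X) with hUdef
  have hUcomp : ∀ m, IsCompact (U m) := fun m =>
    (D m).finite_toSet.isCompact_biUnion fun s hs => (hP m).1 s hs
  have hUanti : Antitone U := antitone_nat_of_succ_le hUnest
  have htendU : Tendsto (ν ∘ U) atTop (𝓝 (ν (⋂ m, U m))) :=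
    tendsto_measure_iInter_atTop
      (fun m => ((hUcomp m).isClosed.measurableSet).nullMeasurableSet) hUanti
      ⟨0, measure_ne_top ν _⟩
  -- the lower bound sequence tends to `A / 2`
  have hmul : Multipliable c := by
    by_contra h
    rw [tprod_eq_one_of_not_multipliable h] at hprod
    norm_num at hprod
  have hptend : Tendsto (fun n => p n) atTop (𝓝 (1 / 2)) := by
    rw [← hprod]
    exact hmul.hasProd.tendsto_prod_nat
  have hptend' : Tendsto (fun n => p (n + 1)) atTop (𝓝 (1 / 2)) :=
    hptend.comp (tendsto_add_atTop_nat 1)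
  have hlbtend : Tendsto (fun n => A * ENNReal.ofReal (p (n + 1))) atTop
      (𝓝 (A * ENNReal.ofReal (1 / 2))) :=
    ENNReal.Tendsto.const_mul (ENNReal.tendsto_ofReal hptend') (Or.inr hAtop)
  have hhalf : A * ENNReal.ofReal (1 / 2) = ν Set.univ / 2 := by
    rw [hAdef, ENNReal.ofReal_div_of_pos (by norm_num)]
    norm_num [ENNReal.div_eq_inv_mul, mul_comm]
  rw [← hhalf]
  exact le_of_tendsto_of_tendsto' hlbtend htendU fun n => (hP n).2.2.2
end
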